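/- arXiv:1407.0533 — 4 statements merged into one kernel-verified Lean document; each statement's English description precedes it below -/
import Mathlib

section
/- For every integer M ≥ 1 and every real t, the product ∏_{m=1}^{M} cos(t/2^m) equals (1/2^{M-1}) · ∑_{m=1}^{2^{M-1}} cos((2m-1)t/2^M). -/
/-!
Induct on the number of factors with `t` fixed. For `θ = t / 2 ^ (M + 1)`, the new factor
`2 cos θ` turns each old term `cos ((2j+1) · 2θ)` into `cos ((4j+1) θ) + cos ((4j+3) θ)` by the
product-to-sum formula, and these are the new terms of indices `2j` and `2j+1`.
-/

open Finset Real

namespace Finset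

theorem sum_range_two_mul {M : Type*} [AddCommMonoid M] (f : ℕ → M) (n : ℕ) :
    ∑ j ∈ range (2 * n), f j = ∑ i ∈ range n, (f (2 * i) + f (2 * i + 1)) := by
  induction n with
  | zero => simp
  | succ n ih =>
    rw [Nat.mul_succ, sum_range_succ, sum_range_succ, ih, sum_range_succ, add_assoc]

end Finset

theorem cos_add_cos_odd_mul (j : ℕ) (θ : ℝ) :
    cos ((4 * j + 1) * θ) + cos ((4 * j + 3) * θ) = 2 * cos θ * cos ((2 * j + 1) * (2 * θ)) := by
  rw [cos_add_cos, ← cos_neg ((_ - _) / 2)]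
  ring_nf

theorem two_pow_mul_prod_cos_div_two_pow (n : ℕ) (t : ℝ) :
    2 ^ n * ∏ m ∈ range (n + 1), cos (t / 2 ^ (m + 1)) =
      ∑ j ∈ range (2 ^ n), cos ((2 * j + 1) * (t / 2 ^ (n + 1))) := by
  induction n with
  | zero => simp
  | succ n ih =>
    have h_half : t / 2 ^ (n + 1) = 2 * (t / 2 ^ (n + 2)) := by field_simp; ring
    calc 2 ^ (n + 1) * ∏ m ∈ range (n + 2), cos (t / 2 ^ (m + 1))
        = 2 * cos (t / 2 ^ (n + 2)) * (2 ^ n * ∏ m ∈ range (n + 1), cos (t / 2 ^ (m + 1))) := by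
          rw [prod_range_succ]; ring
      _ = ∑ j ∈ range (2 ^ n), 2 * cos (t / 2 ^ (n + 2)) * cos ((2 * j + 1) * (t / 2 ^ (n + 1))) := by
          rw [ih, mul_sum]
      _ = ∑ j ∈ range (2 ^ (n + 1)), cos ((2 * j + 1) * (t / 2 ^ (n + 2))) := by
          rw [Nat.pow_succ', sum_range_two_mul, h_half]
          refine sum_congr rfl fun j _ => ?_
          rw [← cos_add_cos_odd_mul]
          push_cast
          ring_nf

theorem incomplete_cosine_identity (M : ℕ) (hM : 1 ≤ M) (t : ℝ) :
    ∏ m ∈ Finset.Icc 1 M, Real.cos (t / 2 ^ m) =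
      (1 / 2 ^ (M - 1)) *
        ∑ m ∈ Finset.Icc (1 : ℕ) (2 ^ (M - 1) : ℕ), Real.cos ((2 * (m : ℝ) - 1) * t / 2 ^ M) := by
  obtain ⟨n, rfl⟩ : ∃ n, M = n + 1 := ⟨M - 1, by omega⟩
  rw [Nat.add_sub_cancel, ← Ico_add_one_right_eq_Icc, ← Ico_add_one_right_eq_Icc,
    prod_Ico_eq_prod_range, sum_Ico_eq_sum_range, Nat.add_sub_cancel, Nat.add_sub_cancel,
    one_div_mul_eq_div, eq_div_iff (by positivity), mul_comm]
  simp_rw [Nat.add_comm 1]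
  rw [two_pow_mul_prod_cos_div_two_pow]
  refine sum_congr rfl fun j _ => ?_
  push_cast
  ring_nf
end

section
/- For every nonzero real t, the infinite product ∏_{m=1}^{∞} cos(t/2^m) converges to sin(t)/t (Viète's formula for the sinc function). -/
/-! Halving the argument of `sinc` splits off a cosine factor, `sinc (2 * y) = sinc y * cos y`.
Iterating, `sinc x = sinc (x / 2 ^ n) * ∏_{m=1}^n cos (x / 2 ^ m)`, and `sinc (x / 2 ^ n) → sinc 0 = 1`
by continuity of `sinc`. -/

open Filter Topology Finset

namespace Real

lemma sinc_two_mul (y : ℝ) : sinc (2 * y) = sinc y * cos y := by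
  rcases eq_or_ne y 0 with rfl | hy
  · simp
  · rw [sinc_of_ne_zero (mul_ne_zero two_ne_zero hy), sinc_of_ne_zero hy, sin_two_mul]
    field_simp

lemma sinc_eq_sinc_div_two_pow_mul_prod_cos (x : ℝ) (n : ℕ) :
    sinc x = sinc (x / 2 ^ n) * ∏ m ∈ Icc 1 n, cos (x / 2 ^ m) := by
  induction n with
  | zero => simp
  | succ n ih =>
    have halve : x / 2 ^ n = 2 * (x / 2 ^ (n + 1)) := by ring
    rw [prod_Icc_succ_top (Nat.le_add_left 1 n), ih, halve, sinc_two_mul]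
    ring

lemma tendsto_sinc_div_two_pow (x : ℝ) :
    Tendsto (fun n : ℕ => sinc (x / 2 ^ n)) atTop (𝓝 1) := by
  have h : Tendsto (fun n : ℕ => x / 2 ^ n) atTop (𝓝 0) :=
    tendsto_const_nhds.div_atTop (tendsto_pow_atTop_atTop_of_one_lt one_lt_two)
  rw [← sinc_zero]
  exact (continuous_sinc.tendsto 0).comp h

lemma tendsto_prod_cos_div_two_pow (x : ℝ) :
    Tendsto (fun n : ℕ => ∏ m ∈ Icc 1 n, cos (x / 2 ^ m)) atTop (𝓝 (sinc x)) := by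
  have h := tendsto_sinc_div_two_pow x
  have hquot : Tendsto (fun n : ℕ => sinc x / sinc (x / 2 ^ n)) atTop (𝓝 (sinc x / 1)) :=
    tendsto_const_nhds.div h one_ne_zero
  rw [div_one] at hquot
  refine hquot.congr' ?_
  filter_upwards [h.eventually_ne one_ne_zero] with n hn
  rw [div_eq_iff hn, mul_comm]
  exact sinc_eq_sinc_div_two_pow_mul_prod_cos x n

end Real

theorem viete_sinc (t : ℝ) (ht : t ≠ 0) :
    Filter.Tendsto (fun M : ℕ => ∏ m ∈ Finset.Icc 1 M, Real.cos (t / 2 ^ m))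
      Filter.atTop (nhds (Real.sin t / t)) := by
  rw [← Real.sinc_of_ne_zero ht]
  exact Real.tendsto_prod_cos_div_two_pow t
end

section
/- The Faddeeva function w(z) = e^{−z²}(1 + (2i/√π)∫_0^z e^{t²} dt) satisfies, for Im(z) > 0, the integral representation w(z) = (1/√π) ∫_0^∞ exp(−t²/4) · exp(izt) dt. -/
open Complex in
/-- The Faddeeva function, with the contour integral ∫_0^z e^{t²} dt realized along the
segment from 0 to z (path-independent since e^{t²} is entire). -/
noncomputable def faddeeva (z : ℂ) : ℂ :=
  Complex.exp (-z ^ 2) *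
    (1 + (2 * I / Real.sqrt Real.pi) * ∫ s in (0 : ℝ)..1, z * Complex.exp ((s * z) ^ 2))

/-!
With `c = -iz`, so that `Re c = Im z > 0`, completing the square gives
`e^{-t²/4} e^{izt} = e^{-z²} e^{-(t/2 + c)²}`, hence the right-hand side equals
`(2/√π) e^{-z²} ∫_0^∞ e^{-(u + c)²} du`. This integral is `√π/2 - ∫_0^1 c e^{-(sc)²} ds`:
since `∂ₛ e^{-(u + sc)²} = c ∂ᵤ e^{-(u + sc)²}`, integrating this derivative over
`(0, ∞) × [0, 1]` in both orders (Fubini, with a Gaussian dominating function, which is where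
`Re c ≥ 0` enters) yields the two sides. Finally `∫_0^1 c e^{-(sc)²} ds = -i ∫_0^1 z e^{(sz)²} ds`.
-/

open Complex MeasureTheory Set Filter Topology
open scoped Real

lemma norm_cexp_neg_add_sq_le {w : ℂ} (hw : 0 ≤ w.re) {u : ℝ} (hu : 0 ≤ u) :
    ‖cexp (-((u : ℂ) + w) ^ 2)‖ ≤ Real.exp (w.im ^ 2) * Real.exp (-u ^ 2) := by
  rw [norm_exp, ← Real.exp_add]
  gcongr
  simp only [neg_re, pow_two, mul_re, add_re, ofReal_re, add_im, ofReal_im, zero_add]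
  nlinarith [mul_nonneg hu hw, sq_nonneg w.re]

lemma tendsto_cexp_neg_add_sq_atTop (w : ℂ) :
    Tendsto (fun u : ℝ => cexp (-((u : ℂ) + w) ^ 2)) atTop (𝓝 0) := by
  rw [tendsto_zero_iff_norm_tendsto_zero]
  have hre (u : ℝ) : (-((u : ℂ) + w) ^ 2).re = -(u + w.re) ^ 2 + w.im ^ 2 := by
    simp only [neg_re, pow_two, mul_re, add_re, ofReal_re, add_im, ofReal_im, zero_add]; ring
  simp only [norm_exp, hre]
  refine Real.tendsto_exp_atBot.comp (tendsto_atBot_add_const_right _ _ ?_)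
  exact tendsto_neg_atTop_atBot.comp
    ((tendsto_pow_atTop two_ne_zero).comp (tendsto_atTop_add_const_right _ _ tendsto_id))

lemma integrableOn_Ioi_cexp_neg_add_sq {w : ℂ} (hw : 0 ≤ w.re) :
    IntegrableOn (fun u : ℝ => cexp (-((u : ℂ) + w) ^ 2)) (Ioi 0) := by
  refine Integrable.mono' (((integrable_exp_neg_mul_sq one_pos).const_mul
    (Real.exp (w.im ^ 2))).integrableOn) (by fun_prop) ?_
  filter_upwards [ae_restrict_mem measurableSet_Ioi] with u hu
  simpa using norm_cexp_neg_add_sq_le hw (le_of_lt hu)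

lemma integral_Ioi_cexp_neg_sq :
    ∫ u in Ioi (0 : ℝ), cexp (-(u : ℂ) ^ 2) = (√π : ℂ) / 2 := by
  have h := integral_gaussian_Ioi 1
  simp only [neg_mul, one_mul, div_one] at h
  rw [← ofReal_ofNat, ← ofReal_div, ← h, ← integral_complex_ofReal]
  push_cast
  rfl

lemma hasDerivAt_cexp_neg_sq (w : ℂ) :
    HasDerivAt (fun w => cexp (-w ^ 2)) (-2 * w * cexp (-w ^ 2)) w := by
  simpa [mul_comm] using ((hasDerivAt_pow 2 w).neg).cexp

lemma integrable_add_mul_exp_neg_sq (a : ℝ) :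
    Integrable (fun u : ℝ => (u + a) * Real.exp (-u ^ 2)) := by
  have h₁ := integrable_mul_exp_neg_mul_sq one_pos
  have h₂ := (integrable_exp_neg_mul_sq one_pos).const_mul a
  simp only [neg_mul, one_mul] at h₁ h₂
  exact (h₁.add h₂).congr (.of_forall fun u => by simp only [Pi.add_apply]; ring)

lemma integral_Ioi_intervalIntegral_comm {E : Type*} [NormedAddCommGroup E] [NormedSpace ℝ E]
    [CompleteSpace E] {F : ℝ → ℝ → E} (hF : Continuous (Function.uncurry F)) {a b₁ b₂ : ℝ}
    (hb : b₁ ≤ b₂) {g : ℝ → ℝ} (hg : IntegrableOn g (Ioi a))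
    (hFg : ∀ u ∈ Ioi a, ∀ s ∈ Icc b₁ b₂, ‖F u s‖ ≤ g u) :
    ∫ u in Ioi a, ∫ s in b₁..b₂, F u s = ∫ s in b₁..b₂, ∫ u in Ioi a, F u s := by
  simp only [intervalIntegral.integral_of_le hb]
  refine integral_integral_swap ?_
  have hmeas := hF.aestronglyMeasurable (μ := (volume.restrict (Ioi a)).prod
    (volume.restrict (Ioc b₁ b₂)))
  refine (integrable_prod_iff hmeas).2 ⟨.of_forall fun u => ?_, ?_⟩
  · exact (hF.comp (Continuous.prodMk_right u)).integrableOn_Ioc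
  refine (hg.const_mul (b₂ - b₁)).mono' hmeas.norm.integral_prod_right' ?_
  filter_upwards [ae_restrict_mem measurableSet_Ioi] with u hu
  calc ‖∫ s in Ioc b₁ b₂, ‖F u s‖‖ ≤ g u * volume.real (Ioc b₁ b₂) :=
        norm_setIntegral_le_of_norm_le_const measure_Ioc_lt_top fun s hs => by
          rw [norm_norm]; exact hFg u hu s (Ioc_subset_Icc_self hs)
    _ = (b₂ - b₁) * g u := by rw [Real.volume_real_Ioc_of_le hb, mul_comm]

noncomputable def gaussianShiftDeriv (c : ℂ) (u s : ℝ) : ℂ :=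
  -2 * c * ((u : ℂ) + s * c) * cexp (-((u : ℂ) + s * c) ^ 2)

section gaussianShiftDeriv

variable (c : ℂ)

lemma hasDerivAt_cexp_neg_add_mul_sq (u s : ℝ) :
    HasDerivAt (fun s : ℝ => cexp (-((u : ℂ) + s * c) ^ 2)) (gaussianShiftDeriv c u s) s := by
  have h := (hasDerivAt_cexp_neg_sq ((u : ℂ) + s * c)).comp s
    (((hasDerivAt_id (s : ℂ)).mul_const c).const_add (u : ℂ)).comp_ofReal
  exact h.congr_deriv (by unfold gaussianShiftDeriv; ring)

lemma hasDerivAt_mul_cexp_neg_add_mul_sq (u s : ℝ) :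
    HasDerivAt (fun u : ℝ => c * cexp (-((u : ℂ) + s * c) ^ 2)) (gaussianShiftDeriv c u s) u := by
  have h := ((hasDerivAt_cexp_neg_sq ((u : ℂ) + s * c)).comp u
    ((hasDerivAt_id (u : ℂ)).add_const (s * c : ℂ)).comp_ofReal).const_mul c
  exact h.congr_deriv (by unfold gaussianShiftDeriv; ring)

lemma continuous_gaussianShiftDeriv : Continuous (Function.uncurry (gaussianShiftDeriv c)) := by
  unfold gaussianShiftDeriv Function.uncurry
  fun_prop

lemma norm_gaussianShiftDeriv_le (hc : 0 ≤ c.re) {u s : ℝ} (hu : 0 ≤ u) (hs : s ∈ Icc 0 1) :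
    ‖gaussianShiftDeriv c u s‖ ≤
      2 * ‖c‖ * Real.exp (c.im ^ 2) * ((u + ‖c‖) * Real.exp (-u ^ 2)) := by
  obtain ⟨hs₀, hs₁⟩ := hs
  have hsc : ‖(s * c : ℂ)‖ ≤ ‖c‖ := by
    rw [norm_mul, norm_real, Real.norm_of_nonneg hs₀]
    exact mul_le_of_le_one_left (norm_nonneg c) hs₁
  have him : ((s * c : ℂ).im) ^ 2 ≤ c.im ^ 2 := by
    rw [im_ofReal_mul, mul_pow]
    exact mul_le_of_le_one_left (sq_nonneg _) (pow_le_one₀ hs₀ hs₁)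
  have hexp : ‖cexp (-((u : ℂ) + s * c) ^ 2)‖ ≤ Real.exp (c.im ^ 2) * Real.exp (-u ^ 2) :=
    (norm_cexp_neg_add_sq_le (by simpa using mul_nonneg hs₀ hc) hu).trans (by gcongr)
  have hlin : ‖(u : ℂ) + s * c‖ ≤ u + ‖c‖ := by
    refine (norm_add_le _ _).trans ?_
    rw [norm_real, Real.norm_of_nonneg hu]
    gcongr
  calc ‖gaussianShiftDeriv c u s‖
      = 2 * ‖c‖ * ‖(u : ℂ) + s * c‖ * ‖cexp (-((u : ℂ) + s * c) ^ 2)‖ := by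
        simp [gaussianShiftDeriv]
    _ ≤ 2 * ‖c‖ * (u + ‖c‖) * (Real.exp (c.im ^ 2) * Real.exp (-u ^ 2)) := by gcongr
    _ = _ := by ring

lemma integrableOn_gaussianShiftDeriv_bound :
    IntegrableOn (fun u => 2 * ‖c‖ * Real.exp (c.im ^ 2) * ((u + ‖c‖) * Real.exp (-u ^ 2)))
      (Ioi 0) :=
  ((integrable_add_mul_exp_neg_sq ‖c‖).const_mul _).integrableOn

lemma intervalIntegral_gaussianShiftDeriv (u : ℝ) :
    ∫ s in (0 : ℝ)..1, gaussianShiftDeriv c u s =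
      cexp (-((u : ℂ) + c) ^ 2) - cexp (-(u : ℂ) ^ 2) := by
  rw [intervalIntegral.integral_eq_sub_of_hasDerivAt
    (fun s _ => hasDerivAt_cexp_neg_add_mul_sq c u s)
    (((continuous_gaussianShiftDeriv c).uncurry_left u).intervalIntegrable _ _)]
  simp

lemma integral_Ioi_gaussianShiftDeriv (hc : 0 ≤ c.re) {s : ℝ} (hs : s ∈ Icc 0 1) :
    ∫ u in Ioi (0 : ℝ), gaussianShiftDeriv c u s = -(c * cexp (-((s : ℂ) * c) ^ 2)) := by
  have hint : IntegrableOn (gaussianShiftDeriv c · s) (Ioi 0) :=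
    (integrableOn_gaussianShiftDeriv_bound c).mono'
      ((continuous_gaussianShiftDeriv c).uncurry_right s).aestronglyMeasurable
      ((ae_restrict_mem measurableSet_Ioi).mono fun u hu =>
        norm_gaussianShiftDeriv_le c hc (le_of_lt hu) hs)
  rw [integral_Ioi_of_hasDerivAt_of_tendsto'
    (fun u _ => hasDerivAt_mul_cexp_neg_add_mul_sq c u s) hint
    (by simpa using (tendsto_cexp_neg_add_sq_atTop ((s : ℂ) * c)).const_mul c)]
  simp

end gaussianShiftDeriv

lemma integral_Ioi_cexp_neg_add_sq {c : ℂ} (hc : 0 ≤ c.re) :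
    ∫ u in Ioi (0 : ℝ), cexp (-((u : ℂ) + c) ^ 2) =
      (√π : ℂ) / 2 - ∫ s in (0 : ℝ)..1, c * cexp (-((s : ℂ) * c) ^ 2) := by
  have hdiff : ∫ u in Ioi (0 : ℝ), (cexp (-((u : ℂ) + c) ^ 2) - cexp (-(u : ℂ) ^ 2)) =
      -∫ s in (0 : ℝ)..1, c * cexp (-((s : ℂ) * c) ^ 2) := calc
    _ = ∫ u in Ioi (0 : ℝ), ∫ s in (0 : ℝ)..1, gaussianShiftDeriv c u s := by
      simp only [intervalIntegral_gaussianShiftDeriv]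
    _ = ∫ s in (0 : ℝ)..1, ∫ u in Ioi (0 : ℝ), gaussianShiftDeriv c u s :=
      integral_Ioi_intervalIntegral_comm (continuous_gaussianShiftDeriv c) zero_le_one
        (integrableOn_gaussianShiftDeriv_bound c)
        fun u hu s hs => norm_gaussianShiftDeriv_le c hc (le_of_lt hu) hs
    _ = ∫ s in (0 : ℝ)..1, -(c * cexp (-((s : ℂ) * c) ^ 2)) :=
      intervalIntegral.integral_congr fun s hs =>
        integral_Ioi_gaussianShiftDeriv c hc (by rwa [uIcc_of_le zero_le_one] at hs)
    _ = _ := intervalIntegral.integral_neg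
  rw [integral_sub (integrableOn_Ioi_cexp_neg_add_sq hc)
    (by simpa [IntegrableOn] using integrableOn_Ioi_cexp_neg_add_sq (w := 0) le_rfl),
    integral_Ioi_cexp_neg_sq] at hdiff
  linear_combination hdiff

lemma faddeeva_eq_integral_Ioi {z : ℂ} (hz : 0 ≤ z.im) :
    faddeeva z = 2 / √π * cexp (-z ^ 2) * ∫ u in Ioi (0 : ℝ), cexp (-((u : ℂ) - I * z) ^ 2) := by
  have hrot : ∫ s in (0 : ℝ)..1, -(I * z) * cexp (-((s : ℂ) * -(I * z)) ^ 2) =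
      -I * ∫ s in (0 : ℝ)..1, z * cexp (((s : ℂ) * z) ^ 2) := by
    rw [← intervalIntegral.integral_const_mul]
    congr 1 with s
    have hsq : -((s : ℂ) * -(I * z)) ^ 2 = ((s : ℂ) * z) ^ 2 := by
      linear_combination (-(s : ℂ) ^ 2 * z ^ 2) * I_sq
    rw [hsq]
    ring
  simp only [sub_eq_add_neg]
  rw [integral_Ioi_cexp_neg_add_sq (by simpa using hz), hrot, faddeeva]
  have : (√π : ℂ) ≠ 0 := ofReal_ne_zero.2 (Real.sqrt_pos.2 Real.pi_pos).ne'
  field_simp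
  ring

lemma integral_Ioi_cexp_neg_sq_div_four_mul_cexp (z : ℂ) :
    ∫ t in Ioi (0 : ℝ), cexp (-(t : ℂ) ^ 2 / 4) * cexp (I * z * t) =
      2 * cexp (-z ^ 2) * ∫ u in Ioi (0 : ℝ), cexp (-((u : ℂ) - I * z) ^ 2) := by
  have hsq (t : ℝ) : cexp (-(t : ℂ) ^ 2 / 4) * cexp (I * z * t) =
      cexp (-z ^ 2) * cexp (-(((2⁻¹ * t : ℝ) : ℂ) - I * z) ^ 2) := by
    rw [← exp_add, ← exp_add]
    congr 1
    push_cast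
    linear_combination z ^ 2 * I_sq
  simp only [hsq, integral_const_mul]
  rw [integral_comp_mul_left_Ioi (fun u : ℝ => cexp (-((u : ℂ) - I * z) ^ 2)) 0 (by norm_num)]
  simp only [inv_inv, mul_zero, real_smul, ofReal_ofNat]
  ring

open Complex in
theorem faddeeva_integral_repr (z : ℂ) (hz : 0 < z.im) :
    faddeeva z =
      (1 / Real.sqrt Real.pi : ℂ) *
        ∫ t in Set.Ioi (0 : ℝ), Complex.exp (-(t : ℂ) ^ 2 / 4) * Complex.exp (I * z * t) := by
  rw [integral_Ioi_cexp_neg_sq_div_four_mul_cexp, faddeeva_eq_integral_Ioi hz.le]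
  ring
end

section
/- For real T_P with 0 < T_P < 2π and every real t, the series ∑_{p=−∞}^{∞} sinc(t + p·T_P) converges to π/T_P. -/
noncomputable def sinc (t : ℝ) : ℝ := if t = 0 then 1 else Real.sin t / t

/-!
Since `T * sinc (c * T) = ∫₀ᵀ cos (c θ) dθ`, the symmetric partial sum equals
`T⁻¹ ∫₀ᵀ cos (t θ / T) D_N(θ) dθ`, where `D_N(θ) = ∑_{|p| ≤ N} cos (p θ)` is the Dirichlet kernel.
As `D_N(θ) sin (θ / 2) = sin ((N + 1/2) θ)` and `sin (θ / 2)` vanishes on `[0, T]` only at `θ = 0`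
(this is where `T < 2π` enters), the Riemann–Lebesgue lemma shows that only `∫₀^π D_N = π`
survives in the limit.
-/

open MeasureTheory Filter Topology Set
open Real hiding sinc
open scoped FourierTransform

theorem tendsto_integral_mul_sin_atTop {f : ℝ → ℝ} (hf : Integrable f) :
    Tendsto (fun r : ℝ => ∫ v, f v * sin (r * v)) atTop (𝓝 0) := by
  have hw : Tendsto (fun r : ℝ => -(r / (2 * π))) atTop (cocompact ℝ) :=
    (tendsto_neg_atTop_atBot.comp (tendsto_id.atTop_div_const (by positivity))).mono_right
      (by rw [cocompact_eq_atBot_atTop]; exact le_sup_left)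
  -- `∫ f v * sin (r * v)` is the imaginary part of the Fourier integral of `f` at `-r / (2π)`
  have hRL := (Complex.continuous_im.tendsto 0).comp
    ((Real.tendsto_integral_exp_smul_cocompact fun v => (f v : ℂ)).comp hw)
  rw [Complex.zero_im] at hRL
  refine hRL.congr fun r => ?_
  have hint : Integrable fun v : ℝ => 𝐞 (-(v * -(r / (2 * π)))) • (f v : ℂ) :=
    hf.ofReal.bdd_mul (c := 1) (by fun_prop) (.of_forall fun v => by simp [Circle.norm_coe])
  simp only [Function.comp_apply]
  rw [← Complex.imCLM_apply, ← Complex.imCLM.integral_comp_comm hint]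
  congr 1 with v
  have : 2 * π * -(v * -(r / (2 * π))) = r * v := by field_simp
  rw [Complex.imCLM_apply, Circle.smul_def, Real.fourierChar_apply, this, smul_eq_mul,
    Complex.im_mul_ofReal, Complex.exp_ofReal_mul_I_im, mul_comm]

theorem tendsto_intervalIntegral_mul_sin_atTop {g : ℝ → ℝ} {a b : ℝ}
    (hg : IntervalIntegrable g volume a b) :
    Tendsto (fun r : ℝ => ∫ θ in a..b, g θ * sin (r * θ)) atTop (𝓝 0) := by
  have hind : Integrable ((uIoc a b).indicator g) :=
    (integrable_indicator_iff measurableSet_uIoc).2 (intervalIntegrable_iff.1 hg)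
  simpa [intervalIntegral.intervalIntegral_eq_integral_uIoc,
    ← integral_indicator measurableSet_uIoc, indicator_mul_left] using
    (tendsto_integral_mul_sin_atTop hind).const_smul (if a ≤ b then (1 : ℝ) else -1)

theorem Real.sin_eq_mul_sinc (x : ℝ) : sin x = x * Real.sinc x := by
  rcases eq_or_ne x 0 with rfl | hx
  · simp
  · rw [Real.sinc_of_ne_zero hx, mul_div_cancel₀ _ hx]

theorem Real.sinc_pos_of_abs_lt_pi {x : ℝ} (hx : |x| < π) : 0 < Real.sinc x := by
  obtain ⟨hlo, hhi⟩ := abs_lt.1 hx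
  rcases lt_trichotomy x 0 with hneg | rfl | hpos
  · rw [← Real.sinc_neg, Real.sinc_of_ne_zero (by linarith)]
    exact div_pos (sin_pos_of_pos_of_lt_pi (by linarith) (by linarith)) (by linarith)
  · simp
  · rw [Real.sinc_of_ne_zero hpos.ne']
    exact div_pos (sin_pos_of_pos_of_lt_pi hpos hhi) hpos

theorem integral_cos_mul (c T : ℝ) : ∫ θ in (0 : ℝ)..T, cos (c * θ) = T * Real.sinc (c * T) := by
  rcases eq_or_ne c 0 with rfl | hc
  · simp
  rcases eq_or_ne T 0 with rfl | hT
  · simp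
  rw [intervalIntegral.integral_comp_mul_left (fun x => cos x) hc, integral_cos, mul_zero,
    sin_zero, sub_zero, smul_eq_mul, Real.sinc_of_ne_zero (mul_ne_zero hc hT)]
  field_simp

theorem Finset.sum_Icc_neg_natCast_succ {M : Type*} [AddCommMonoid M] (f : ℤ → M) (n : ℕ) :
    ∑ p ∈ Icc (-((n + 1 : ℕ) : ℤ)) (n + 1 : ℕ), f p
      = f (-(n + 1)) + f (n + 1) + ∑ p ∈ Icc (-(n : ℤ)) n, f p := by
  have hIcc : Icc (-((n + 1 : ℕ) : ℤ)) (n + 1 : ℕ)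
      = insert (-((n : ℤ) + 1)) (insert ((n : ℤ) + 1) (Icc (-(n : ℤ)) n)) := by
    ext p; simp only [Finset.mem_Icc, Finset.mem_insert]; omega
  rw [hIcc, Finset.sum_insert (by simp only [Finset.mem_insert, Finset.mem_Icc]; omega),
    Finset.sum_insert (by simp only [Finset.mem_Icc]; omega), add_assoc]

noncomputable def dirichletKernel (N : ℕ) (θ : ℝ) : ℝ :=
  ∑ p ∈ Finset.Icc (-(N : ℤ)) N, cos (p * θ)

@[fun_prop]
theorem continuous_dirichletKernel (N : ℕ) : Continuous (dirichletKernel N) := by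
  unfold dirichletKernel; fun_prop

theorem dirichletKernel_mul_sin_half (N : ℕ) (θ : ℝ) :
    dirichletKernel N θ * sin (θ / 2) = sin ((N + 1 / 2) * θ) := by
  induction N with
  | zero => simp [dirichletKernel, div_eq_inv_mul]
  | succ n ih =>
    rw [dirichletKernel, Finset.sum_Icc_neg_natCast_succ, add_mul, ← dirichletKernel, ih]
    push_cast
    have e1 : ((n : ℝ) + 1 + 1 / 2) * θ = (n + 1) * θ + θ / 2 := by ring
    have e2 : ((n : ℝ) + 1 / 2) * θ = (n + 1) * θ - θ / 2 := by ring
    rw [e1, e2, neg_mul, cos_neg, sin_add, sin_sub]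
    ring

theorem sum_cos_add_mul (a θ : ℝ) (N : ℕ) :
    ∑ p ∈ Finset.Icc (-(N : ℤ)) N, cos (a + p * θ) = cos a * dirichletKernel N θ := by
  induction N with
  | zero => simp [dirichletKernel]
  | succ n ih =>
    rw [dirichletKernel, Finset.sum_Icc_neg_natCast_succ, Finset.sum_Icc_neg_natCast_succ, ih,
      dirichletKernel]
    push_cast
    rw [neg_mul, cos_neg, ← sub_eq_add_neg, cos_add, cos_sub]
    ring

theorem integral_dirichletKernel_zero_pi (N : ℕ) : ∫ θ in (0 : ℝ)..π, dirichletKernel N θ = π := by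
  unfold dirichletKernel
  rw [intervalIntegral.integral_finsetSum fun (p : ℤ) _ =>
    (by fun_prop : Continuous fun θ : ℝ => cos ((p : ℝ) * θ)).intervalIntegrable _ _]
  simp_rw [integral_cos_mul]
  rw [Finset.sum_eq_single 0]
  · simp
  · intro p _ hp
    rw [Real.sinc_of_ne_zero (by positivity), sin_int_mul_pi, zero_div, mul_zero]
  · simp

theorem tendsto_intervalIntegral_mul_dirichletKernel {f g : ℝ → ℝ} {a b : ℝ}
    (hg : IntervalIntegrable g volume a b) (hfg : ∀ θ ∈ uIcc a b, f θ = g θ * sin (θ / 2)) :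
    Tendsto (fun N : ℕ => ∫ θ in a..b, f θ * dirichletKernel N θ) atTop (𝓝 0) := by
  have hN : Tendsto (fun N : ℕ => (N : ℝ) + 1 / 2) atTop atTop :=
    tendsto_atTop_add_const_right _ _ tendsto_natCast_atTop_atTop
  refine ((tendsto_intervalIntegral_mul_sin_atTop hg).comp hN).congr fun N =>
    intervalIntegral.integral_congr fun θ hθ => ?_
  dsimp only [Function.comp_apply]
  rw [hfg θ hθ, mul_assoc, mul_comm (sin _), dirichletKernel_mul_sin_half]

theorem tendsto_integral_dirichletKernel {T : ℝ} (hT : 0 < T) (hT' : T < 2 * π) :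
    Tendsto (fun N : ℕ => ∫ θ in (0 : ℝ)..T, dirichletKernel N θ) atTop (𝓝 π) := by
  have hsin : ∀ θ ∈ uIcc π T, sin (θ / 2) ≠ 0 := fun θ hθ => by
    have h1 := min_le_iff.1 hθ.1
    have h2 := le_max_iff.1 hθ.2
    exact (sin_pos_of_pos_of_lt_pi (by rcases h1 with h | h <;> linarith [pi_pos])
      (by rcases h2 with h | h <;> linarith [pi_pos])).ne'
  have hrest := tendsto_intervalIntegral_mul_dirichletKernel (f := 1) (a := π) (b := T)
    ((continuousOn_inv₀.comp (by fun_prop) hsin).intervalIntegrable)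
    fun θ hθ => (inv_mul_cancel₀ (hsin θ hθ)).symm
  refine (add_zero π ▸ hrest.const_add π).congr fun N => ?_
  rw [← intervalIntegral.integral_add_adjacent_intervals
    ((continuous_dirichletKernel N).intervalIntegrable 0 π)
    ((continuous_dirichletKernel N).intervalIntegrable π T), integral_dirichletKernel_zero_pi]
  simp

theorem tendsto_integral_cos_mul_dirichletKernel (s : ℝ) {T : ℝ} (hT : 0 < T) (hT' : T < 2 * π) :
    Tendsto (fun N : ℕ => ∫ θ in (0 : ℝ)..T, cos (s * θ) * dirichletKernel N θ) atTop (𝓝 π) := by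
  -- `(cos (s * θ) - 1) / sin (θ / 2)`, written through `sinc` so that it is continuous at `θ = 0`
  set G : ℝ → ℝ := fun θ => -(s ^ 2 * θ) * Real.sinc (s * θ / 2) ^ 2 / Real.sinc (θ / 2)
  have hsinc : ∀ θ ∈ uIcc 0 T, Real.sinc (θ / 2) ≠ 0 := fun θ hθ => by
    rw [uIcc_of_le hT.le] at hθ
    exact (Real.sinc_pos_of_abs_lt_pi (by rw [abs_lt]; constructor <;> linarith [hθ.1, hθ.2])).ne'
  have hG : ∀ θ ∈ uIcc 0 T, cos (s * θ) - 1 = G θ * sin (θ / 2) := fun θ hθ => by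
    have hcos : cos (s * θ) = 1 - 2 * sin (s * θ / 2) ^ 2 := by
      rw [← cos_two_mul_eq_one_sub]; ring_nf
    simp only [G]
    rw [hcos, sin_eq_mul_sinc, sin_eq_mul_sinc (θ / 2)]
    field_simp [hsinc θ hθ]
    ring
  have hGcont : ContinuousOn G (uIcc 0 T) :=
    (by fun_prop : Continuous fun θ => -(s ^ 2 * θ) * Real.sinc (s * θ / 2) ^ 2).continuousOn.div
      (by fun_prop) hsinc
  have hcosm1 := tendsto_intervalIntegral_mul_dirichletKernel hGcont.intervalIntegrable hG
  refine (zero_add π ▸ hcosm1.add (tendsto_integral_dirichletKernel hT hT')).congr fun N => ?_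
  rw [← intervalIntegral.integral_add
    ((by fun_prop : Continuous fun θ => (cos (s * θ) - 1) * dirichletKernel N θ)
      |>.intervalIntegrable _ _)
    ((continuous_dirichletKernel N).intervalIntegrable _ _)]
  congr 1 with θ
  ring

theorem sum_sinc_add_mul_eq_integral (t : ℝ) {T : ℝ} (hT : T ≠ 0) (N : ℕ) :
    ∑ p ∈ Finset.Icc (-(N : ℤ)) N, sinc (t + p * T)
      = T⁻¹ * ∫ θ in (0 : ℝ)..T, cos (t / T * θ) * dirichletKernel N θ := by
  have hp : ∀ p : ℤ, sinc (t + p * T) = T⁻¹ * ∫ θ in (0 : ℝ)..T, cos (t / T * θ + p * θ) := by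
    intro p
    have h := integral_cos_mul ((t + p * T) / T) T
    rw [div_mul_cancel₀ _ hT] at h
    simp_rw [add_div, mul_div_cancel_right₀ _ hT, add_mul] at h
    rw [h, inv_mul_cancel_left₀ hT]
    rfl
  simp_rw [hp, ← Finset.mul_sum, ← sum_cos_add_mul]
  rw [← intervalIntegral.integral_finsetSum fun (p : ℤ) _ =>
    (by fun_prop : Continuous fun θ => cos (t / T * θ + (p : ℝ) * θ)).intervalIntegrable _ _]

theorem sinc_periodization (T : ℝ) (hT : 0 < T) (hT' : T < 2 * Real.pi) (t : ℝ) :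
    Filter.Tendsto (fun N : ℕ => ∑ p ∈ Finset.Icc (-(N : ℤ)) (N : ℤ), sinc (t + p * T))
      Filter.atTop (nhds (Real.pi / T)) := by
  simp_rw [sum_sinc_add_mul_eq_integral t hT.ne', div_eq_inv_mul π]
  exact (tendsto_integral_cos_mul_dirichletKernel (t / T) hT hT').const_mul T⁻¹
end
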